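/- Let G be a finite connected multigraph, H a refinement of G, T a tree, and φ: H → T a finite harmonic morphism of degree sgon(G). Let v' ∈ V(T) be a leaf of T such that every vertex v ∈ V(H) with φ(v) = v' is an external added vertex of H, and let T' = T \ {v'}. Then there exist a refinement H' of G and a finite harmonic morphism φ': H' → T' with deg(φ') ≤ deg(φ); moreover H' can be taken to be H with all vertices mapped to v' removed (taking the connected component containing G), and φ' the restriction of φ. -/

import Mathlib

/-- A finite multigraph: finite vertex and edge types, where each edge carries an
unordered pair of endpoints (loops and parallel edges are allowed). -/
structure Multigraph where
  V : Type
  E : Type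
  fintypeV : Fintype V
  fintypeE : Fintype E
  nonemptyV : Nonempty V
  ends : E → Sym2 V

attribute [instance] Multigraph.fintypeV Multigraph.fintypeE Multigraph.nonemptyV

namespace Multigraph

/-- Walks in a multigraph, recorded as sequences of edges with compatible endpoints. -/
inductive Walk (M : Multigraph) : M.V → M.V → Type where
  | nil (v : M.V) : Walk M v v
  | cons {u v w : M.V} (e : M.E) (he : M.ends e = s(u, v)) (p : Walk M v w) : Walk M u w

namespace Walk

/-- The list of edges of a walk. -/
def edges {M : Multigraph} : {a b : M.V} → M.Walk a b → List M.E
  | _, _, .nil _ => []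
  | _, _, .cons e _ p => e :: p.edges

/-- The list of vertices visited by a walk (including both endpoints). -/
def support {M : Multigraph} : {a b : M.V} → M.Walk a b → List M.V
  | a, _, .nil _ => [a]
  | a, _, .cons _ _ p => a :: p.support

end Walk

/-- A multigraph is connected if any two vertices are joined by a walk. -/
def Connected (M : Multigraph) : Prop := ∀ u v : M.V, Nonempty (M.Walk u v)

/-- A multigraph is a tree if it is connected with exactly one more vertex than
edges (equivalently: connected and acyclic; in particular no loops or parallel edges). -/
def IsTree (M : Multigraph) : Prop :=
  M.Connected ∧ Fintype.card M.E + 1 = Fintype.card M.V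

/-- A leaf: a vertex incident with exactly one edge. -/
def IsLeaf (M : Multigraph) (v : M.V) : Prop := ∃! e : M.E, v ∈ M.ends e

/-- The branch `T_a(b)` of a tree `T` at `a` towards `b`: the set of vertices that can be
reached from `b` by a walk avoiding `a` (the component of `T - a` containing `b`). -/
def branch (M : Multigraph) (a b : M.V) : Set M.V :=
  {w | ∃ p : M.Walk b w, a ∉ p.support}

end Multigraph

/-- A finite morphism between multigraphs: vertices map to vertices, edges map to edges
compatibly with endpoints, and every edge carries a positive integer index. -/
structure Morphism (A B : Multigraph) where
  vMap : A.V → B.V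
  eMap : A.E → B.E
  ends_eq : ∀ e : A.E, B.ends (eMap e) = (A.ends e).map vMap
  r : A.E → ℕ
  r_pos : ∀ e : A.E, 0 < r e

namespace Morphism

open Classical in
/-- The sum `∑_{e ∋ v, φ(e) = e'} r_φ(e)`. -/
noncomputable def localDeg {A B : Multigraph} (φ : Morphism A B) (v : A.V) (e' : B.E) : ℕ :=
  ∑ e : A.E, if v ∈ A.ends e ∧ φ.eMap e = e' then φ.r e else 0

/-- A morphism is harmonic if, for every vertex `v`, the local sum
`∑_{e ∋ v, φ(e) = e'} r_φ(e)` does not depend on the choice of the edge `e'`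
incident with `φ(v)`. -/
def Harmonic {A B : Multigraph} (φ : Morphism A B) : Prop :=
  ∀ (v : A.V) (e₁ e₂ : B.E), φ.vMap v ∈ B.ends e₁ → φ.vMap v ∈ B.ends e₂ →
    φ.localDeg v e₁ = φ.localDeg v e₂

open Classical in
/-- The sum `∑_{e, φ(e) = e'} r_φ(e)`. -/
noncomputable def degreeOn {A B : Multigraph} (φ : Morphism A B) (e' : B.E) : ℕ :=
  ∑ e : A.E, if φ.eMap e = e' then φ.r e else 0

/-- `φ` has degree `d` if `∑_{e, φ(e) = e'} r_φ(e) = d` for every edge `e'` of the target. -/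
def HasDegree {A B : Multigraph} (φ : Morphism A B) (d : ℕ) : Prop :=
  ∀ e' : B.E, φ.degreeOn e' = d

end Morphism

/-- A refinement of `G`: a (connected) multigraph `H` obtained from `G` by subdividing each
edge of `G` into a path and attaching finitely many trees to vertices.  The subdivision path
of the edge `e` is recorded by `subWalk`, and the vertices of the attached trees are the
external added vertices, recorded by `isExternal`. -/
structure Refinement (G : Multigraph) where
  H : Multigraph
  connH : H.Connected
  vMap : G.V → H.V
  vMap_inj : Function.Injective vMap
  /-- each edge of `H` lies on the subdivision path of (at most) one edge of `G`;
  edges of the attached trees get `none`. -/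
  edgeOrigin : H.E → Option G.E
  /-- the external added vertices: vertices of the attached trees. -/
  isExternal : H.V → Prop
  external_not_orig : ∀ v : G.V, ¬ isExternal (vMap v)
  /-- the subdivision path `R_e` replacing the edge `e = uv` of `G`. -/
  subWalk : ∀ (e : G.E) (u v : G.V), G.ends e = s(u, v) → H.Walk (vMap u) (vMap v)
  subWalk_edges_nodup : ∀ e u v he, (subWalk e u v he).edges.Nodup
  subWalk_edges_origin : ∀ e u v he (f : H.E),
      f ∈ (subWalk e u v he).edges ↔ edgeOrigin f = some e
  subWalk_path : ∀ e u v he, u ≠ v → (subWalk e u v he).support.Nodup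
  subWalk_cycle : ∀ e u v he, u = v →
      (subWalk e u v he).support.tail.Nodup ∧ (subWalk e u v he).edges ≠ []
  subWalk_internal : ∀ e u v he (w : H.V), w ∈ (subWalk e u v he).support →
      ¬ isExternal w ∧ (∀ x : G.V, vMap x = w → w = vMap u ∨ w = vMap v)
  subWalk_disjoint : ∀ e₁ u₁ v₁ he₁ e₂ u₂ v₂ he₂ (w : H.V), e₁ ≠ e₂ →
      w ∈ (subWalk e₁ u₁ v₁ he₁).support → w ∈ (subWalk e₂ u₂ v₂ he₂).support →
      ∃ x : G.V, vMap x = w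
  vertex_cases : ∀ w : H.V, (∃ x : G.V, vMap x = w) ∨ isExternal w ∨
      ∃ (e : G.E) (u v : G.V) (he : G.ends e = s(u, v)), w ∈ (subWalk e u v he).support
  external_edge : ∀ f : H.E, edgeOrigin f = none → ∃ w : H.V, w ∈ H.ends f ∧ isExternal w
  external_incident : ∀ (f : H.E) (w : H.V), isExternal w → w ∈ H.ends f →
      edgeOrigin f = none
  added_acyclic : ∀ (x : H.V) (p : H.Walk x x), p.edges.Nodup →
      (∀ f ∈ p.edges, edgeOrigin f = none) → p.edges = []

/-- The attached tree `G_v(u)` hanging at the vertex `v` of `G` and containing the external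
added vertex `u`: all vertices reachable from `u` by walks in the attached trees avoiding `v`. -/
def Refinement.attachedTree {G : Multigraph} (R : Refinement G) (v : G.V) (u : R.H.V) :
    Set R.H.V :=
  {w | ∃ p : R.H.Walk u w, (∀ f ∈ p.edges, R.edgeOrigin f = none) ∧ R.vMap v ∉ p.support}

/-- `sgon(G) = k`: the stable gonality of `G`, i.e. the minimum of the degrees of all finite
harmonic morphisms from a refinement of `G` to a tree, equals `k`. -/
def IsStableGonality (G : Multigraph) (k : ℕ) : Prop :=
  (∃ (R : Refinement G) (T : Multigraph) (φ : Morphism R.H T),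
      T.IsTree ∧ φ.Harmonic ∧ φ.HasDegree k) ∧
  ∀ k' : ℕ, (∃ (R : Refinement G) (T : Multigraph) (φ : Morphism R.H T),
      T.IsTree ∧ φ.Harmonic ∧ φ.HasDegree k') → k ≤ k'

/-!
Remove the leaf `v'` from `T` and keep the part `H'` of `H` that can be reached from `G`
without meeting the fibre over `v'`. As that fibre consists of external added vertices, `H'`
contains every subdivision path, so it is again a refinement of `G`. An edge of `H` lying over
an edge of `T - v'` has both ends outside the fibre, so a vertex of `H'` keeps all its edges
over `T - v'`: the restriction of `φ` is still harmonic, with the same local degrees. A harmonic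
morphism to a connected loopless graph has a well-defined degree, and here it is at most
`deg φ` because only edges are removed.
-/

lemma Sym2.mem_attachWith {α : Type*} {P : α → Prop} {s : Sym2 α} (h : ∀ a ∈ s, P a)
    {a : {a // P a}} : a ∈ s.attachWith h ↔ a.val ∈ s := by
  conv_rhs => rw [← Sym2.attachWith_map_subtypeVal h, Sym2.mem_map]
  exact ⟨fun ha => ⟨a, ha, rfl⟩, fun ⟨b, hb, hba⟩ => Subtype.val_injective hba ▸ hb⟩

lemma Fintype.sum_subtype_of_support_subset {ι M : Type*} [Fintype ι] [AddCommMonoid M]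
    {p : ι → Prop} {_ : Fintype (Subtype p)} (f : ι → M) (hf : ∀ i, f i ≠ 0 → p i) :
    ∑ i : Subtype p, f i = ∑ i, f i := by
  classical
  rw [← Finset.sum_subtype (Finset.univ.filter p) (by simp) f]
  exact Finset.sum_filter_of_ne fun i _ => hf i

lemma Fintype.sum_subtype_le_sum {ι M : Type*} [Fintype ι] [AddCommMonoid M] [PartialOrder M]
    [CanonicallyOrderedAdd M] {p : ι → Prop} {_ : Fintype (Subtype p)} (f : ι → M) :
    ∑ i : Subtype p, f i ≤ ∑ i, f i := by
  classical
  rw [← Finset.sum_subtype (Finset.univ.filter p) (by simp) f]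
  exact Finset.sum_le_sum_of_subset (Finset.filter_subset _ _)

namespace Multigraph

variable {M : Multigraph}

namespace Walk

@[simp] lemma support_nil (v : M.V) : (Walk.nil (M := M) v).support = [v] := rfl

@[simp] lemma support_cons {u v w : M.V} (e : M.E) (he : M.ends e = s(u, v)) (p : M.Walk v w) :
    (Walk.cons e he p).support = u :: p.support := rfl

lemma start_mem_support : ∀ {a b : M.V} (p : M.Walk a b), a ∈ p.support
  | _, _, .nil _ => List.mem_singleton_self _
  | _, _, .cons _ _ _ => List.mem_cons_self

lemma end_mem_support : ∀ {a b : M.V} (p : M.Walk a b), b ∈ p.support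
  | _, _, .nil _ => List.mem_singleton_self _
  | _, _, .cons _ _ p => List.mem_cons_of_mem _ p.end_mem_support

def append : ∀ {a b c : M.V}, M.Walk a b → M.Walk b c → M.Walk a c
  | _, _, _, .nil _, q => q
  | _, _, _, .cons e he p, q => .cons e he (p.append q)

lemma mem_support_append {x : M.V} : ∀ {a b c : M.V} (p : M.Walk a b) (q : M.Walk b c),
    x ∈ (p.append q).support ↔ x ∈ p.support ∨ x ∈ q.support
  | _, _, _, .nil _, q => by
    simp only [append, support_nil, List.mem_singleton, iff_or_self]
    rintro rfl
    exact q.start_mem_support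
  | _, _, _, .cons e he p, q => by
    simp [append, mem_support_append p q, or_assoc]

def reverse : ∀ {a b : M.V}, M.Walk a b → M.Walk b a
  | _, _, .nil a => .nil a
  | _, _, .cons e he p => p.reverse.append (.cons e (he.trans Sym2.eq_swap) (.nil _))

lemma mem_support_reverse {x : M.V} : ∀ {a b : M.V} (p : M.Walk a b),
    x ∈ p.reverse.support ↔ x ∈ p.support
  | _, _, .nil _ => Iff.rfl
  | _, _, .cons e he p => by
    simp only [reverse, mem_support_append, mem_support_reverse p, support_cons, support_nil,
      List.mem_cons, List.not_mem_nil, or_false]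
    constructor
    · rintro (h | rfl | rfl)
      exacts [Or.inr h, Or.inr p.start_mem_support, Or.inl rfl]
    · rintro (rfl | h)
      exacts [Or.inr (Or.inr rfl), Or.inl h]

end Walk

def toSimpleGraph (M : Multigraph) : SimpleGraph M.V := SimpleGraph.fromEdgeSet (Set.range M.ends)

lemma Connected.toSimpleGraph (hM : M.Connected) : M.toSimpleGraph.Connected := by
  have reach : ∀ {a b : M.V}, M.Walk a b → M.toSimpleGraph.Reachable a b := by
    intro a b p
    induction p with
    | nil => rfl
    | @cons u v w e he _ ih =>
      by_cases huv : u = v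
      · exact huv ▸ ih
      · have hadj : M.toSimpleGraph.Adj u v :=
          (SimpleGraph.fromEdgeSet_adj (Set.range M.ends)).2 ⟨⟨e, he⟩, huv⟩
        exact hadj.reachable.trans ih
  exact ⟨fun a b => reach (hM a b).some⟩

lemma Connected.card_V_le_card_nonLoop_add_one (hM : M.Connected) :
    Nat.card M.V ≤ Nat.card {e : M.E // ¬(M.ends e).IsDiag} + 1 := by
  have hedge : ∀ z : M.toSimpleGraph.edgeSet, ∃ e : {e : M.E // ¬(M.ends e).IsDiag},
      M.ends e = z := by
    rintro ⟨z, hz⟩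
    rw [Multigraph.toSimpleGraph, SimpleGraph.edgeSet_fromEdgeSet] at hz
    obtain ⟨⟨e, rfl⟩, hdiag⟩ := hz
    exact ⟨⟨e, hdiag⟩, rfl⟩
  choose lift hlift using hedge
  have hinj : Function.Injective lift := fun z z' h =>
    Subtype.ext ((hlift z).symm.trans (h ▸ hlift z'))
  calc Nat.card M.V ≤ Nat.card M.toSimpleGraph.edgeSet + 1 :=
        hM.toSimpleGraph.card_vert_le_card_edgeSet_add_one
    _ ≤ Nat.card {e : M.E // ¬(M.ends e).IsDiag} + 1 := by
      gcongr
      exact Nat.card_le_card_of_injective lift hinj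

lemma IsTree.not_isDiag (hM : M.IsTree) (e : M.E) : ¬(M.ends e).IsDiag := by
  intro hloop
  have hlt : Nat.card {e : M.E // ¬(M.ends e).IsDiag} < Nat.card M.E :=
    Finite.card_subtype_lt (not_not.2 hloop)
  have hcard := hM.2
  have := hM.1.card_V_le_card_nonLoop_add_one
  simp only [← Nat.card_eq_fintype_card] at hcard
  omega

noncomputable abbrev induce (M : Multigraph) (S : Set M.V) (hS : S.Nonempty) : Multigraph where
  V := S
  E := {f : M.E // ∀ x ∈ M.ends f, x ∈ S}
  fintypeV := Fintype.ofFinite _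
  fintypeE := Fintype.ofFinite _
  nonemptyV := hS.to_subtype
  ends f := (M.ends f.val).attachWith f.2

variable {S : Set M.V} {hS : S.Nonempty}

lemma induce_ends_map_val (f : (M.induce S hS).E) :
    ((M.induce S hS).ends f).map Subtype.val = M.ends f.val :=
  Sym2.attachWith_map_subtypeVal f.2

lemma induce_ends_eq_iff {f : (M.induce S hS).E} {a b : (M.induce S hS).V} :
    (M.induce S hS).ends f = s(a, b) ↔ M.ends f.val = s(a.val, b.val) := by
  rw [← induce_ends_map_val, ← Sym2.map_mk, (Sym2.map.injective Subtype.val_injective).eq_iff]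

namespace Walk

def toInduce : ∀ {a b : M.V} (p : M.Walk a b) (hp : ∀ x ∈ p.support, x ∈ S),
    (M.induce S hS).Walk ⟨a, hp a p.start_mem_support⟩ ⟨b, hp b p.end_mem_support⟩
  | _, _, .nil a, hp => .nil (M := M.induce S hS) ⟨a, hp a (List.mem_singleton_self a)⟩
  | _, _, .cons e he p, hp =>
    have hp' : ∀ x ∈ p.support, x ∈ S := fun x hx => hp x (List.mem_cons_of_mem _ hx)
    have he' : ∀ x ∈ M.ends e, x ∈ S := by
      rw [he, Sym2.forall_mem_pair]
      exact ⟨hp _ List.mem_cons_self, hp' _ p.start_mem_support⟩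
    .cons (M := M.induce S hS) ⟨e, he'⟩ (induce_ends_eq_iff.2 he) (p.toInduce hp')

lemma support_toInduce : ∀ {a b : M.V} (p : M.Walk a b) (hp : ∀ x ∈ p.support, x ∈ S),
    (p.toInduce (hS := hS) hp).support.map Subtype.val = p.support
  | _, _, .nil _, _ => rfl
  | _, _, .cons _ _ p, _ => congrArg (List.cons _) (p.support_toInduce _)

lemma edges_toInduce : ∀ {a b : M.V} (p : M.Walk a b) (hp : ∀ x ∈ p.support, x ∈ S),
    (p.toInduce (hS := hS) hp).edges.map Subtype.val = p.edges
  | _, _, .nil _, _ => rfl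
  | _, _, .cons _ _ p, _ => congrArg (List.cons _) (p.edges_toInduce _)

def ofInduce : ∀ {a b : (M.induce S hS).V}, (M.induce S hS).Walk a b → M.Walk a.val b.val
  | _, _, .nil a => .nil a.val
  | _, _, .cons e he p => .cons e.val (induce_ends_eq_iff.1 he) p.ofInduce

lemma edges_ofInduce : ∀ {a b : (M.induce S hS).V} (p : (M.induce S hS).Walk a b),
    p.ofInduce.edges = p.edges.map Subtype.val
  | _, _, .nil _ => rfl
  | _, _, .cons _ _ p => congrArg (List.cons _) p.edges_ofInduce

end Walk

lemma induce_connected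
    (hS' : ∀ a ∈ S, ∀ b ∈ S, ∃ p : M.Walk a b, ∀ x ∈ p.support, x ∈ S) :
    (M.induce S hS).Connected := fun a b =>
  have ⟨p, hp⟩ := hS' a a.2 b b.2
  ⟨p.toInduce hp⟩

variable {v : M.V}

lemma IsTree.exists_leaf_edge (hM : M.IsTree) (hv : M.IsLeaf v) :
    ∃ e o, M.ends e = s(v, o) ∧ o ≠ v ∧ ∀ f, v ∈ M.ends f → f = e := by
  obtain ⟨e, hve, huniq⟩ := hv
  obtain ⟨o, ho⟩ := Sym2.mem_iff_exists.1 hve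
  refine ⟨e, o, ho, fun hov => hM.not_isDiag e ?_, huniq⟩
  rw [ho, hov, Sym2.mk_isDiag_iff]

lemma IsTree.exists_walk_avoiding_leaf (hM : M.IsTree) (hv : M.IsLeaf v) {u w : M.V}
    (hu : u ≠ v) (hw : w ≠ v) : ∃ p : M.Walk u w, ∀ x ∈ p.support, x ≠ v := by
  classical
  obtain ⟨e₀, o, he₀, hov, huniq⟩ := hM.exists_leaf_edge hv
  -- a walk through the leaf `v` enters and leaves it through its only neighbour `o`
  suffices key : ∀ {u : M.V} (p : M.Walk u w) (u' : M.V), (if u = v then o else u) = u' →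
      ∃ q : M.Walk u' w, ∀ x ∈ q.support, x ≠ v from key (hM.1 u w).some u (if_neg hu)
  intro u p
  induction p with
  | nil a =>
    rintro u' rfl
    rw [if_neg hw]
    exact ⟨.nil a, by simpa using hw⟩
  | @cons u x _ e he _ ih =>
    intro u' hu'
    by_cases huv : u = v
    · rw [if_pos huv] at hu'
      subst huv hu'
      obtain rfl := huniq e (he ▸ Sym2.mem_mk_left _ _)
      have hxo : x = o := Sym2.congr_right.1 (he.symm.trans he₀)
      exact ih hw _ (by rw [if_neg (hxo ▸ hov), hxo])
    · rw [if_neg huv] at hu'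
      subst hu'
      by_cases hxv : x = v
      · subst hxv
        obtain rfl := huniq e (he ▸ Sym2.mem_mk_right _ _)
        have huo : u = o := Sym2.congr_right.1 (Sym2.eq_swap.trans (he.symm.trans he₀))
        exact ih hw _ (by rw [if_pos rfl, huo])
      · obtain ⟨q, hq⟩ := ih hw x (if_neg hxv)
        refine ⟨.cons e he q, ?_⟩
        simpa [huv] using hq

lemma IsTree.induce_ne_leaf (hM : M.IsTree) (hv : M.IsLeaf v) (hS : {t | t ≠ v}.Nonempty) :
    (M.induce {t | t ≠ v} hS).IsTree := by
  classical
  refine ⟨induce_connected fun a ha b hb => hM.exists_walk_avoiding_leaf hv ha hb, ?_⟩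
  have hV : Fintype.card (M.induce {t | t ≠ v} hS).V = Fintype.card M.V - 1 := Set.card_ne_eq v
  have hE : Fintype.card (M.induce {t | t ≠ v} hS).E = Fintype.card M.E - 1 := by
    obtain ⟨e, hve, huniq⟩ := hv
    have hone : Fintype.card {f // v ∈ M.ends f} = 1 :=
      Fintype.card_eq_one_iff.2 ⟨⟨e, hve⟩, fun f => Subtype.ext (huniq f f.2)⟩
    rw [← hone, ← Fintype.card_subtype_compl]
    exact Fintype.card_congr <| Equiv.subtypeEquivRight fun f =>
      ⟨fun h hvf => h v hvf rfl, fun h x hx hxv => h (hxv ▸ hx)⟩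
  have hpos : 0 < Fintype.card M.E := Fintype.card_pos_iff.2 ⟨hv.exists.choose⟩
  have hcard := hM.2
  simp only [Fintype.card_eq_nat_card] at hV hE hpos hcard ⊢
  omega

end Multigraph

namespace Morphism

open Multigraph

variable {A B : Multigraph} (φ : Morphism A B)

lemma existsUnique_mem_ends_vMap_eq {f : A.E} {t : B.V} (hloop : ¬(B.ends (φ.eMap f)).IsDiag)
    (ht : t ∈ B.ends (φ.eMap f)) : ∃! w, w ∈ A.ends f ∧ φ.vMap w = t := by
  rw [φ.ends_eq] at hloop ht
  generalize A.ends f = z at hloop ht ⊢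
  induction z using Sym2.ind with
  | h p q =>
    rw [Sym2.map_mk, Sym2.mk_isDiag_iff] at hloop
    rw [Sym2.map_mk, Sym2.mem_iff] at ht
    simp only [ExistsUnique, Sym2.mem_iff]
    rcases ht with rfl | rfl
    · exact ⟨p, ⟨Or.inl rfl, rfl⟩, by rintro w ⟨rfl | rfl, hw⟩ <;> simp_all⟩
    · exact ⟨q, ⟨Or.inr rfl, rfl⟩, by rintro w ⟨rfl | rfl, hw⟩ <;> simp_all⟩

open Classical in
lemma degreeOn_eq_sum_localDeg {a : B.E} {t : B.V} (hloop : ¬(B.ends a).IsDiag)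
    (ht : t ∈ B.ends a) : φ.degreeOn a = ∑ w with φ.vMap w = t, φ.localDeg w a := by
  unfold degreeOn localDeg
  rw [Finset.sum_comm]
  refine Finset.sum_congr rfl fun f _ => ?_
  split_ifs with hfa
  · subst hfa
    obtain ⟨w₀, ⟨hw₀f, hw₀t⟩, huniq⟩ := φ.existsUnique_mem_ends_vMap_eq hloop ht
    rw [Finset.sum_eq_single_of_mem w₀ (by simpa using hw₀t) fun w hw hne => if_neg ?_]
    · simp [hw₀f]
    · exact fun ⟨hwf, _⟩ => hne (huniq w ⟨hwf, (Finset.mem_filter.1 hw).2⟩)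
  · exact (Finset.sum_eq_zero fun w _ => if_neg fun h => hfa h.2).symm

section Degree

variable {φ}

lemma Harmonic.degreeOn_eq_of_mem_ends (hφ : φ.Harmonic) {a b : B.E} {t : B.V}
    (hla : ¬(B.ends a).IsDiag) (hlb : ¬(B.ends b).IsDiag) (ha : t ∈ B.ends a)
    (hb : t ∈ B.ends b) : φ.degreeOn a = φ.degreeOn b := by
  classical
  rw [φ.degreeOn_eq_sum_localDeg hla ha, φ.degreeOn_eq_sum_localDeg hlb hb]
  refine Finset.sum_congr rfl fun w hw => ?_
  have hwt : φ.vMap w = t := (Finset.mem_filter.1 hw).2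
  exact hφ w a b (hwt ▸ ha) (hwt ▸ hb)

lemma Harmonic.degreeOn_eq (hφ : φ.Harmonic) (hconn : B.Connected)
    (hloop : ∀ e, ¬(B.ends e).IsDiag) (a b : B.E) : φ.degreeOn a = φ.degreeOn b := by
  obtain ⟨w, hw⟩ : ∃ w, w ∈ B.ends b := ⟨_, (B.ends b).out_fst_mem⟩
  suffices key : ∀ {u : B.V} (_ : B.Walk u w) (a : B.E), u ∈ B.ends a →
      φ.degreeOn a = φ.degreeOn b from
    key (hconn _ _).some a (B.ends a).out_fst_mem
  intro u p
  induction p with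
  | nil => exact fun a ha => hφ.degreeOn_eq_of_mem_ends (hloop a) (hloop b) ha hw
  | cons e he _ ih =>
    exact fun a ha => (hφ.degreeOn_eq_of_mem_ends (hloop a) (hloop e) ha
      (he ▸ Sym2.mem_mk_left _ _)).trans (ih hw e (he ▸ Sym2.mem_mk_right _ _))

lemma Harmonic.exists_hasDegree_le (hφ : φ.Harmonic) (hconn : B.Connected)
    (hloop : ∀ e, ¬(B.ends e).IsDiag) {k : ℕ} (hk : ∀ a, φ.degreeOn a ≤ k) :
    ∃ d, φ.HasDegree d ∧ d ≤ k := by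
  rcases isEmpty_or_nonempty B.E with hE | hE
  · exact ⟨0, fun a => isEmptyElim a, Nat.zero_le k⟩
  · obtain ⟨a⟩ := hE
    exact ⟨φ.degreeOn a, fun b => hφ.degreeOn_eq hconn hloop b a, hk a⟩

end Degree

variable {S : Set A.V} (hS : S.Nonempty)
  {S' : Set B.V} (hS' : S'.Nonempty) (hmaps : Set.MapsTo φ.vMap S S')

noncomputable def restrict : Morphism (A.induce S hS) (B.induce S' hS') where
  vMap w := ⟨φ.vMap w, hmaps w.2⟩
  eMap f := ⟨φ.eMap f, by
    rw [φ.ends_eq]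
    rintro _ hy
    obtain ⟨x, hx, rfl⟩ := Sym2.mem_map.1 hy
    exact hmaps (f.2 x hx)⟩
  ends_eq f := by
    apply Sym2.map.injective Subtype.val_injective
    rw [induce_ends_map_val, Sym2.map_map, φ.ends_eq, ← induce_ends_map_val, Sym2.map_map]
    rfl
  r f := φ.r f
  r_pos f := φ.r_pos f

open Classical in
lemma restrict_localDeg
    (hclosed : ∀ f w x, w ∈ S → w ∈ A.ends f → x ∈ A.ends f → φ.vMap x ∈ S' → x ∈ S)
    (w : (A.induce S hS).V) (a : (B.induce S' hS').E) :
    (φ.restrict hS hS' hmaps).localDeg w a = φ.localDeg w a := by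
  unfold localDeg
  simp only [Sym2.mem_attachWith, Subtype.ext_iff]
  refine Fintype.sum_subtype_of_support_subset (p := fun f => ∀ x ∈ A.ends f, x ∈ S)
    (fun f => if w.val ∈ A.ends f ∧ φ.eMap f = a.val then φ.r f else 0) fun f hf x hx => ?_
  obtain ⟨hwf, hfa⟩ : w.val ∈ A.ends f ∧ φ.eMap f = a.val := by
    by_contra h
    exact hf (if_neg h)
  have hφx : φ.vMap x ∈ B.ends a.val := hfa ▸ φ.ends_eq f ▸ Sym2.mem_map.2 ⟨x, hx, rfl⟩
  exact hclosed f w x w.2 hwf hx (a.2 _ hφx)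

open Classical in
lemma restrict_degreeOn_le (a : (B.induce S' hS').E) :
    (φ.restrict hS hS' hmaps).degreeOn a ≤ φ.degreeOn a := by
  unfold degreeOn
  simp only [Subtype.ext_iff]
  exact Fintype.sum_subtype_le_sum (p := fun f => ∀ x ∈ A.ends f, x ∈ S)
    fun f => if φ.eMap f = a.val then φ.r f else 0

variable {φ} in
lemma Harmonic.restrict (hφ : φ.Harmonic)
    (hclosed : ∀ f w x, w ∈ S → w ∈ A.ends f → x ∈ A.ends f → φ.vMap x ∈ S' → x ∈ S) :
    (φ.restrict hS hS' hmaps).Harmonic := by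
  intro w a b ha hb
  rw [restrict_localDeg φ hS hS' hmaps hclosed, restrict_localDeg φ hS hS' hmaps hclosed]
  exact hφ w a b (Sym2.mem_attachWith _ |>.1 ha) (Sym2.mem_attachWith _ |>.1 hb)

end Morphism

namespace Refinement

open Multigraph

variable {G : Multigraph} (R : Refinement G)

lemma exists_walk_not_isExternal {a b : G.V} (p : G.Walk a b) :
    ∃ q : R.H.Walk (R.vMap a) (R.vMap b), ∀ x ∈ q.support, ¬R.isExternal x := by
  induction p with
  | nil a =>
    refine ⟨.nil _, fun x hx => ?_⟩
    rw [Walk.support_nil, List.mem_singleton] at hx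
    subst hx
    exact R.external_not_orig a
  | cons e he _ ih =>
    obtain ⟨q, hq⟩ := ih
    refine ⟨(R.subWalk _ _ _ he).append q, fun x hx => ?_⟩
    rcases (Walk.mem_support_append _ _).1 hx with hx | hx
    exacts [(R.subWalk_internal _ _ _ he x hx).1, hq x hx]

section Induce

variable {S : Set R.H.V} (hbase : ∀ g, R.vMap g ∈ S)
  (hsub : ∀ e u v he, ∀ x ∈ (R.subWalk e u v he).support, x ∈ S)
  (hconn : ∀ a ∈ S, ∀ b ∈ S, ∃ p : R.H.Walk a b, ∀ x ∈ p.support, x ∈ S)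

noncomputable def induce : Refinement G where
  H := R.H.induce S (Set.nonempty_of_mem (hbase (Classical.arbitrary G.V)))
  connH := induce_connected hconn
  vMap g := ⟨R.vMap g, hbase g⟩
  vMap_inj _ _ h := R.vMap_inj (congrArg Subtype.val h)
  edgeOrigin f := R.edgeOrigin f.val
  isExternal w := R.isExternal w.val
  external_not_orig := R.external_not_orig
  subWalk e u v he := (R.subWalk e u v he).toInduce (hsub e u v he)
  subWalk_edges_nodup e u v he := by
    refine List.Nodup.of_map Subtype.val ?_
    rw [Walk.edges_toInduce]
    exact R.subWalk_edges_nodup e u v he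
  subWalk_edges_origin e u v he f := by
    rw [← List.mem_map_of_injective Subtype.val_injective, Walk.edges_toInduce]
    exact R.subWalk_edges_origin e u v he f.val
  subWalk_path e u v he hne := by
    refine List.Nodup.of_map Subtype.val ?_
    rw [Walk.support_toInduce]
    exact R.subWalk_path e u v he hne
  subWalk_cycle e u v he huv := by
    obtain ⟨hnodup, hne⟩ := R.subWalk_cycle e u v he huv
    refine ⟨List.Nodup.of_map Subtype.val ?_, fun h => hne ?_⟩
    · rw [List.map_tail, Walk.support_toInduce]
      exact hnodup
    · simpa only [Walk.edges_toInduce, List.map_nil] using congrArg (List.map Subtype.val) h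
  subWalk_internal e u v he w hw := by
    rw [← List.mem_map_of_injective Subtype.val_injective, Walk.support_toInduce] at hw
    obtain ⟨hint, horig⟩ := R.subWalk_internal e u v he w.val hw
    exact ⟨hint, fun x hx => (horig x (congrArg Subtype.val hx)).imp Subtype.ext Subtype.ext⟩
  subWalk_disjoint e₁ u₁ v₁ he₁ e₂ u₂ v₂ he₂ w hne hw₁ hw₂ := by
    rw [← List.mem_map_of_injective Subtype.val_injective, Walk.support_toInduce] at hw₁ hw₂
    obtain ⟨x, hx⟩ := R.subWalk_disjoint e₁ u₁ v₁ he₁ e₂ u₂ v₂ he₂ w.val hne hw₁ hw₂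
    exact ⟨x, Subtype.ext hx⟩
  vertex_cases w := by
    rcases R.vertex_cases w.val with ⟨x, hx⟩ | hw | ⟨e, u, v, he, hw⟩
    · exact Or.inl ⟨x, Subtype.ext hx⟩
    · exact Or.inr (Or.inl hw)
    · refine Or.inr (Or.inr ⟨e, u, v, he, ?_⟩)
      rw [← List.mem_map_of_injective Subtype.val_injective, Walk.support_toInduce]
      exact hw
  external_edge f hf := by
    obtain ⟨w, hw, hwe⟩ := R.external_edge f.val hf
    exact ⟨⟨w, f.2 w hw⟩, (Sym2.mem_attachWith _).2 hw, hwe⟩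
  external_incident f w hw hwf :=
    R.external_incident f.val w.val hw ((Sym2.mem_attachWith _).1 hwf)
  added_acyclic x p hnodup horig := by
    have h := R.added_acyclic x.val p.ofInduce
      (Walk.edges_ofInduce p ▸ hnodup.map Subtype.val_injective)
      (by simpa [Walk.edges_ofInduce] using horig)
    rwa [Walk.edges_ofInduce, List.map_eq_nil_iff] at h

end Induce

variable {T : Multigraph} (φ : Morphism R.H T) (v' : T.V)

def reachableAvoiding : Set R.H.V :=
  {w | ∃ (g : G.V) (p : R.H.Walk (R.vMap g) w), ∀ x ∈ p.support, φ.vMap x ≠ v'}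

variable {R φ v'}

lemma vMap_ne_of_mem_reachableAvoiding {w : R.H.V} (hw : w ∈ R.reachableAvoiding φ v') :
    φ.vMap w ≠ v' :=
  have ⟨_, p, hp⟩ := hw
  hp w p.end_mem_support

lemma vMap_mem_reachableAvoiding (hext : ∀ w, φ.vMap w = v' → R.isExternal w) (g : G.V) :
    R.vMap g ∈ R.reachableAvoiding φ v' :=
  ⟨g, .nil _, fun x hx hxv => R.external_not_orig g <|
    (List.mem_singleton.1 hx) ▸ hext x hxv⟩

lemma mem_reachableAvoiding_of_mem_ends {w x : R.H.V} {f : R.H.E}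
    (hw : w ∈ R.reachableAvoiding φ v') (hwf : w ∈ R.H.ends f) (hxf : x ∈ R.H.ends f)
    (hx : φ.vMap x ≠ v') : x ∈ R.reachableAvoiding φ v' := by
  obtain rfl | hxw := eq_or_ne x w
  · exact hw
  obtain ⟨g, p, hp⟩ := hw
  refine ⟨g, p.append (.cons f ((Sym2.mem_and_mem_iff hxw.symm).1 ⟨hwf, hxf⟩) (.nil x)), ?_⟩
  intro y hy
  rcases (Walk.mem_support_append _ _).1 hy with hy | hy
  · exact hp y hy
  · simp only [Walk.support_cons, Walk.support_nil, List.mem_cons, List.not_mem_nil,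
      or_false] at hy
    rcases hy with rfl | rfl
    exacts [hp y p.end_mem_support, hx]

lemma support_subset_reachableAvoiding {a b : R.H.V} (p : R.H.Walk a b)
    (ha : a ∈ R.reachableAvoiding φ v') (hp : ∀ x ∈ p.support, φ.vMap x ≠ v') :
    ∀ x ∈ p.support, x ∈ R.reachableAvoiding φ v' := by
  induction p with
  | nil => simpa using ha
  | cons e he q ih =>
    have hnext := mem_reachableAvoiding_of_mem_ends ha (he ▸ Sym2.mem_mk_left _ _)
      (he ▸ Sym2.mem_mk_right _ _) (hp _ (List.mem_cons_of_mem _ q.start_mem_support))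
    simp only [Walk.support_cons, List.forall_mem_cons] at hp ⊢
    exact ⟨ha, ih hnext hp.2⟩

lemma exists_walk_reachableAvoiding (hG : G.Connected)
    (hext : ∀ w, φ.vMap w = v' → R.isExternal w) :
    ∀ a ∈ R.reachableAvoiding φ v', ∀ b ∈ R.reachableAvoiding φ v',
      ∃ p : R.H.Walk a b, ∀ x ∈ p.support, x ∈ R.reachableAvoiding φ v' := by
  rintro a ha b ⟨g₂, p₂, hp₂⟩
  obtain ⟨g₁, p₁, hp₁⟩ := ha
  obtain ⟨q, hq⟩ := R.exists_walk_not_isExternal (hG g₁ g₂).some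
  refine ⟨p₁.reverse.append (q.append p₂),
    support_subset_reachableAvoiding _ ⟨g₁, p₁, hp₁⟩ fun x hx => ?_⟩
  rcases (Walk.mem_support_append _ _).1 hx with hx | hx
  · exact hp₁ x ((Walk.mem_support_reverse p₁).1 hx)
  rcases (Walk.mem_support_append _ _).1 hx with hx | hx
  · exact fun hxv => hq x hx (hext x hxv)
  · exact hp₂ x hx

end Refinement

theorem refinement_no_external_leaf_general
    (G : Multigraph) (hG : G.Connected) (k : ℕ)
    (R : Refinement G) (T : Multigraph) (hT : T.IsTree)
    (φ : Morphism R.H T) (hφ : φ.Harmonic) (hdeg : φ.HasDegree k)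
    (v' : T.V) (hleaf : T.IsLeaf v')
    (hext : ∀ w : R.H.V, φ.vMap w = v' → R.isExternal w) :
    ∃ (T' : Multigraph) (_ : T'.IsTree) (ιV : T'.V → T.V) (ιE : T'.E → T.E),
      Function.Injective ιV ∧ Function.Injective ιE ∧
      (∀ f : T'.E, T.ends (ιE f) = (T'.ends f).map ιV) ∧
      Set.range ιV = {w : T.V | w ≠ v'} ∧
      Set.range ιE = {f : T.E | v' ∉ T.ends f} ∧
      ∃ (R' : Refinement G) (φ' : Morphism R'.H T'),
        φ'.Harmonic ∧
        (∃ d' : ℕ, φ'.HasDegree d' ∧ d' ≤ k) ∧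
        ∃ (κV : R'.H.V → R.H.V) (κE : R'.H.E → R.H.E),
          Function.Injective κV ∧ Function.Injective κE ∧
          (∀ f : R'.H.E, R.H.ends (κE f) = (R'.H.ends f).map κV) ∧
          (∀ g : G.V, κV (R'.vMap g) = R.vMap g) ∧
          Set.range κV =
            {w : R.H.V | ∃ (g : G.V) (p : R.H.Walk (R.vMap g) w),
              ∀ x ∈ p.support, φ.vMap x ≠ v'} ∧
          (∀ w : R'.H.V, ιV (φ'.vMap w) = φ.vMap (κV w)) ∧
          (∀ f : R'.H.E, ιE (φ'.eMap f) = φ.eMap (κE f)) ∧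
          (∀ f : R'.H.E, φ'.r f = φ.r (κE f)) := by
  obtain ⟨-, o, -, hov, -⟩ := hT.exists_leaf_edge hleaf
  have hS' : {t | t ≠ v'}.Nonempty := ⟨o, hov⟩
  have hT' := hT.induce_ne_leaf hleaf hS'
  have hbase := Refinement.vMap_mem_reachableAvoiding hext
  let R' := R.induce hbase
    (fun e u v he => Refinement.support_subset_reachableAvoiding _ (hbase u)
      fun x hx hxv => (R.subWalk_internal e u v he x hx).1 (hext x hxv))
    (Refinement.exists_walk_reachableAvoiding hG hext)
  have hmaps : Set.MapsTo φ.vMap (R.reachableAvoiding φ v') {t | t ≠ v'} :=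
    fun _ => Refinement.vMap_ne_of_mem_reachableAvoiding
  have hS : (R.reachableAvoiding φ v').Nonempty := ⟨_, hbase (Classical.arbitrary G.V)⟩
  let φ' : Morphism R'.H (T.induce _ hS') := φ.restrict hS hS' hmaps
  have hφ' : φ'.Harmonic := hφ.restrict hS hS' hmaps
    fun _ _ _ => Refinement.mem_reachableAvoiding_of_mem_ends
  refine ⟨T.induce _ hS', hT', Subtype.val, Subtype.val, Subtype.val_injective,
    Subtype.val_injective, fun f => (Multigraph.induce_ends_map_val f).symm, Subtype.range_coe, ?_,
    R', φ', hφ', hφ'.exists_hasDegree_le hT'.1 hT'.not_isDiag fun a =>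
      (φ.restrict_degreeOn_le hS hS' hmaps a).trans (hdeg a).le,
    Subtype.val, Subtype.val, Subtype.val_injective, Subtype.val_injective,
    fun f => (Multigraph.induce_ends_map_val (hS := hS) f).symm, fun _ => rfl, Subtype.range_coe,
    fun _ => rfl, fun _ => rfl, fun _ => rfl⟩
  ext f
  rw [Subtype.range_coe_subtype]
  exact ⟨fun h hv => h v' hv rfl, fun h x hx hxv => h (hxv ▸ hx)⟩

/-- **Lemma (removing a leaf of `T` all of whose preimages are external added vertices).**
If `φ : H → T` is a finite harmonic morphism of degree `sgon(G)` from a refinement `H` of `G`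
to a tree `T`, and `v'` is a leaf of `T` such that every vertex of `H` mapped to `v'` is an
external added vertex, then there are a refinement `H'` of `G` and a finite harmonic morphism
`φ' : H' → T'` with `deg(φ') ≤ deg(φ)`, where `T'` is the tree `T \ {v'}` (embedded in `T`
via `ιV, ιE`); moreover `H'` is (embedded via `κV, κE` as) the part of `H` obtained by
removing all vertices mapped to `v'` and keeping the connected component containing `G`,
and `φ'` is the restriction of `φ` (with the same indices). -/
theorem refinement_no_external_leaf
    (G : Multigraph) (hG : G.Connected) (k : ℕ) (hk : IsStableGonality G k)
    (R : Refinement G) (T : Multigraph) (hT : T.IsTree)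
    (φ : Morphism R.H T) (hφ : φ.Harmonic) (hdeg : φ.HasDegree k)
    (v' : T.V) (hleaf : T.IsLeaf v')
    (hext : ∀ w : R.H.V, φ.vMap w = v' → R.isExternal w) :
    ∃ (T' : Multigraph) (_ : T'.IsTree) (ιV : T'.V → T.V) (ιE : T'.E → T.E),
      Function.Injective ιV ∧ Function.Injective ιE ∧
      (∀ f : T'.E, T.ends (ιE f) = (T'.ends f).map ιV) ∧
      Set.range ιV = {w : T.V | w ≠ v'} ∧
      Set.range ιE = {f : T.E | v' ∉ T.ends f} ∧
      ∃ (R' : Refinement G) (φ' : Morphism R'.H T'),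
        φ'.Harmonic ∧
        (∃ d' : ℕ, φ'.HasDegree d' ∧ d' ≤ k) ∧
        ∃ (κV : R'.H.V → R.H.V) (κE : R'.H.E → R.H.E),
          Function.Injective κV ∧ Function.Injective κE ∧
          (∀ f : R'.H.E, R.H.ends (κE f) = (R'.H.ends f).map κV) ∧
          (∀ g : G.V, κV (R'.vMap g) = R.vMap g) ∧
          Set.range κV =
            {w : R.H.V | ∃ (g : G.V) (p : R.H.Walk (R.vMap g) w),
              ∀ x ∈ p.support, φ.vMap x ≠ v'} ∧
          (∀ w : R'.H.V, ιV (φ'.vMap w) = φ.vMap (κV w)) ∧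
          (∀ f : R'.H.E, ιE (φ'.eMap f) = φ.eMap (κE f)) ∧
          (∀ f : R'.H.E, φ'.r f = φ.r (κE f)) :=
  refinement_no_external_leaf_general G hG k R T hT φ hφ hdeg v' hleaf hext
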